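/- Let G be a finite group, ν an acyclic probability measure with H = ⟨supp(ν)⟩, and η a probability measure constant on each left coset of H. Then the basin of attraction of η under T_ν, i.e., {μ ∈ P(G) : lim_m T_ν^m(μ) = η}, is a convex set; specifically it is the intersection of the simplex with an affine subspace determined by the conditions that μ assigns each left coset gH total mass |H|·η({g}). -/

import Mathlib

/-!
Write `μ(gH)` for the mass of a left coset. Since `ν` is supported in `H`, convolving with `ν`
preserves coset masses and fixes `η`; so the basin lies in the affine set, and it remains to show
that `μ - η`, whose coset masses vanish, is driven to `0`. Convolving with a probability vector
does not increase the sup norm, and acyclicity makes `p = ν^{*N}` at least some `ε > 0` on `H`.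
Splitting `p = ε • 1_H + (p - ε • 1_H)`, the first part annihilates every function with vanishing
coset masses and the second has total mass `1 - ε |H|`, so each block of `N` steps contracts the
sup norm by this factor `< 1`. Convexity comes from the affine description.
-/

open Pointwise Filter Topology

/-- Convolution of two probability vectors on a finite group. -/
def conv {G : Type*} [Group G] [Fintype G] (p q : G → ℝ) : G → ℝ :=
  fun g => ∑ a : G, p a * q (a⁻¹ * g)

/-- `k`-fold convolution power of a probability vector. -/
def convPow {G : Type*} [Group G] [Fintype G] [DecidableEq G] (p : G → ℝ) : ℕ → G → ℝ
  | 0 => fun g => if g = 1 then 1 else 0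
  | n + 1 => conv (convPow p n) p

open Finset

section Conv

variable {G : Type*} [Group G] [Fintype G]

theorem sum_inv_mul (q : G → ℝ) (g : G) : ∑ a, q (a⁻¹ * g) = ∑ x, q x :=
  Fintype.sum_equiv ((Equiv.inv G).trans (Equiv.mulRight g)) _ _ fun _ => rfl

theorem sum_conv (p q : G → ℝ) : ∑ g, conv p q g = (∑ g, p g) * ∑ g, q g := by
  simp only [conv]
  rw [sum_comm, sum_mul]
  refine sum_congr rfl fun a _ => ?_
  rw [← mul_sum]
  congr 1
  exact Fintype.sum_equiv (Equiv.mulLeft a⁻¹) _ _ fun _ => rfl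

theorem conv_assoc (p q r : G → ℝ) : conv (conv p q) r = conv p (conv q r) := by
  funext g
  simp only [conv, sum_mul, mul_sum]
  rw [sum_comm]
  refine sum_congr rfl fun a _ => Fintype.sum_equiv (Equiv.mulLeft a⁻¹) _ _ fun b => ?_
  simp [mul_assoc]

theorem sub_conv (f f' q : G → ℝ) : conv (f - f') q = conv f q - conv f' q := by
  funext g
  simp only [conv, Pi.sub_apply, sub_mul, sum_sub_distrib]

theorem conv_sub (f q q' : G → ℝ) : conv f (q - q') = conv f q - conv f q' := by
  funext g
  simp only [conv, Pi.sub_apply, mul_sub, sum_sub_distrib]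

theorem conv_nonneg {p q : G → ℝ} (hp : ∀ g, 0 ≤ p g) (hq : ∀ g, 0 ≤ q g) (g : G) :
    0 ≤ conv p q g :=
  sum_nonneg fun a _ => mul_nonneg (hp a) (hq _)

theorem norm_conv_le_of_nonneg (f : G → ℝ) {q : G → ℝ} (hq : ∀ x, 0 ≤ q x) :
    ‖conv f q‖ ≤ ‖f‖ * ∑ x, q x := by
  have hbound : 0 ≤ ‖f‖ * ∑ x, q x := mul_nonneg (norm_nonneg f) (sum_nonneg fun x _ => hq x)
  refine (pi_norm_le_iff_of_nonneg hbound).2 fun g => ?_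
  calc ‖conv f q g‖ ≤ ∑ a, ‖f a‖ * q (a⁻¹ * g) := by
        refine (norm_sum_le _ _).trans (sum_le_sum fun a _ => ?_)
        rw [norm_mul, Real.norm_of_nonneg (hq _)]
    _ ≤ ∑ a, ‖f‖ * q (a⁻¹ * g) :=
        sum_le_sum fun a _ => mul_le_mul_of_nonneg_right (norm_le_pi_norm f a) (hq _)
    _ = ‖f‖ * ∑ x, q x := by rw [← mul_sum, sum_inv_mul q g]

end Conv

section ConvPow

variable {G : Type*} [Group G] [Fintype G] [DecidableEq G]

theorem conv_convPow_zero (p q : G → ℝ) : conv p (convPow q 0) = p := by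
  funext g
  simp [conv, convPow, inv_mul_eq_one]

theorem convPow_add (p : G → ℝ) (m n : ℕ) :
    convPow p (m + n) = conv (convPow p m) (convPow p n) := by
  induction n with
  | zero => rw [Nat.add_zero, conv_convPow_zero]
  | succ n ih => rw [← Nat.add_assoc, convPow, convPow, ih, conv_assoc]

theorem convPow_nonneg {p : G → ℝ} (hp : ∀ g, 0 ≤ p g) (n : ℕ) (g : G) : 0 ≤ convPow p n g := by
  induction n generalizing g with
  | zero => simp only [convPow]; positivity
  | succ n ih => exact conv_nonneg ih hp g

theorem sum_convPow {p : G → ℝ} (hp : ∑ g, p g = 1) (n : ℕ) : ∑ g, convPow p n g = 1 := by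
  induction n with
  | zero => simp [convPow]
  | succ n ih => rw [convPow, sum_conv, ih, hp, one_mul]

theorem convPow_pos_of_mem_pow {p : G → ℝ} (hp : ∀ g, 0 ≤ p g) {n : ℕ} {g : G}
    (hg : g ∈ {x | 0 < p x} ^ n) : 0 < convPow p n g := by
  induction n generalizing g with
  | zero =>
    rw [pow_zero, Set.mem_one] at hg
    simp [convPow, hg]
  | succ n ih =>
    rw [pow_succ] at hg
    obtain ⟨a, ha, b, hb, rfl⟩ := hg
    refine sum_pos' (fun c _ => mul_nonneg (convPow_nonneg hp n c) (hp _)) ⟨a, mem_univ a, ?_⟩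
    rw [inv_mul_cancel_left]
    exact mul_pos (ih ha) hb

end ConvPow

section Coset

open scoped Classical

variable {G : Type*} [Group G] [Fintype G]

/-- The mass `f(gH)` of the left coset `gH`. -/
noncomputable def cosetSum (H : Subgroup G) (f : G → ℝ) (g : G) : ℝ :=
  ∑ h : H, f (g * h)

variable {H : Subgroup G}

theorem isLinearMap_cosetSum (g : G) : IsLinearMap ℝ fun f : G → ℝ => cosetSum H f g :=
  ⟨fun f f' => by simp [cosetSum, sum_add_distrib], fun a f => by simp [cosetSum, mul_sum]⟩

theorem convex_setOf_cosetSum_eq (c : G → ℝ) :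
    Convex ℝ {μ : G → ℝ | (∀ g, 0 ≤ μ g) ∧ ∑ g, μ g = 1 ∧ ∀ g, cosetSum H μ g = c g} := by
  have hset : {μ : G → ℝ | (∀ g, 0 ≤ μ g) ∧ ∑ g, μ g = 1 ∧ ∀ g, cosetSum H μ g = c g} =
      stdSimplex ℝ G ∩ ⋂ g, {μ | cosetSum H μ g = c g} := by
    ext μ
    simp [stdSimplex, and_assoc]
  rw [hset]
  exact (convex_stdSimplex ℝ G).inter
    (convex_iInter fun g => convex_hyperplane (isLinearMap_cosetSum g) (c g))

theorem sum_subgroup_eq_sum_indicator (F : G → ℝ) :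
    ∑ h : H, F h = ∑ x, (H : Set G).indicator F x := by
  simp only [Set.indicator_apply, SetLike.mem_coe]
  rw [← sum_filter]
  exact (sum_subtype _ (by simp) F).symm

theorem sum_indicator_const (ε : ℝ) :
    ∑ x, (H : Set G).indicator (fun _ => ε) x = Nat.card H * ε := by
  rw [← sum_subgroup_eq_sum_indicator, sum_const, card_univ, Nat.card_eq_fintype_card,
    nsmul_eq_mul]

theorem cosetSum_eq_card_mul {η : G → ℝ} {g : G} (hη : ∀ h ∈ H, η (g * h) = η g) :
    cosetSum H η g = Nat.card H * η g := by
  rw [cosetSum, sum_congr rfl fun (h : H) _ => hη h h.2, sum_const, card_univ,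
    Nat.card_eq_fintype_card, nsmul_eq_mul]

theorem conv_indicator_const (f : G → ℝ) (ε : ℝ) (g : G) :
    conv f ((H : Set G).indicator fun _ => ε) g = ε * cosetSum H f g := by
  rw [cosetSum, mul_sum, sum_subgroup_eq_sum_indicator (fun x => ε * f (g * x))]
  refine Fintype.sum_equiv (Equiv.mulLeft g⁻¹) _ _ fun a => ?_
  have hmem : a⁻¹ * g ∈ H ↔ g⁻¹ * a ∈ H := by rw [← H.inv_mem_iff, mul_inv_rev, inv_inv]
  simp [Set.indicator_apply, hmem, mul_comm]

theorem cosetSum_conv_eq_conv_cosetSum (f q : G → ℝ) (g : G) :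
    cosetSum H (conv f q) g = conv f (cosetSum H q) g := by
  simp only [cosetSum, conv, mul_sum]
  rw [sum_comm]
  simp only [mul_assoc]

theorem cosetSum_eq_indicator {q : G → ℝ} (hq : ∀ x ∉ H, q x = 0) :
    cosetSum H q = (H : Set G).indicator fun _ => ∑ x, q x := by
  funext x
  by_cases hx : x ∈ H
  · calc cosetSum H q x = ∑ h : H, q h :=
          Fintype.sum_equiv (Equiv.mulLeft ⟨x, hx⟩) _ _ fun _ => rfl
      _ = ∑ y, q y := by
          rw [sum_subgroup_eq_sum_indicator,
            Set.indicator_eq_self.2 (Function.support_subset_iff'.2 hq)]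
      _ = _ := (Set.indicator_of_mem hx fun _ => ∑ y, q y).symm
  · rw [Set.indicator_of_notMem hx]
    exact sum_eq_zero fun h _ => hq _ fun hxh => hx (by simpa using H.mul_mem hxh (H.inv_mem h.2))

theorem cosetSum_conv {q : G → ℝ} (hq : ∀ x ∉ H, q x = 0) (f : G → ℝ) (g : G) :
    cosetSum H (conv f q) g = (∑ x, q x) * cosetSum H f g := by
  rw [cosetSum_conv_eq_conv_cosetSum, cosetSum_eq_indicator hq, conv_indicator_const]

theorem conv_eq_zero_of_notMem {p q : G → ℝ} (hp : ∀ x ∉ H, p x = 0) (hq : ∀ x ∉ H, q x = 0)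
    {x : G} (hx : x ∉ H) : conv p q x = 0 := by
  refine sum_eq_zero fun a _ => ?_
  by_cases ha : a ∈ H
  · rw [hq _ fun hax => hx (by simpa using H.mul_mem ha hax), mul_zero]
  · rw [hp a ha, zero_mul]

theorem conv_eq_self {η q : G → ℝ} (hη : ∀ g, ∀ h ∈ H, η (g * h) = η g)
    (hq : ∀ x ∉ H, q x = 0) (hq1 : ∑ x, q x = 1) : conv η q = η := by
  funext g
  have hterm (a : G) : η a * q (a⁻¹ * g) = η g * q (a⁻¹ * g) := by
    by_cases ha : a⁻¹ * g ∈ H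
    · simpa using congrArg (· * q (a⁻¹ * g)) (hη a _ ha).symm
    · rw [hq _ ha, mul_zero, mul_zero]
  simp only [conv, hterm, ← mul_sum, sum_inv_mul, hq1, mul_one]

theorem norm_conv_le_of_cosetSum_eq_zero {f q : G → ℝ} {ε : ℝ} (hf : ∀ g, cosetSum H f g = 0)
    (hεq : (H : Set G).indicator (fun _ => ε) ≤ q) (hq1 : ∑ x, q x = 1) :
    ‖conv f q‖ ≤ ‖f‖ * (1 - Nat.card H * ε) := by
  have hkill : conv f ((H : Set G).indicator fun _ => ε) = 0 := by
    funext g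
    rw [conv_indicator_const, hf, mul_zero, Pi.zero_apply]
  have hsplit : conv f q = conv f (q - (H : Set G).indicator fun _ => ε) := by
    rw [conv_sub, hkill, sub_zero]
  calc ‖conv f q‖ ≤ ‖f‖ * ∑ x, (q - (H : Set G).indicator fun _ => ε) x :=
        hsplit ▸ norm_conv_le_of_nonneg f fun x => sub_nonneg.2 (hεq x)
    _ = ‖f‖ * (1 - Nat.card H * ε) := by
        simp only [Pi.sub_apply, sum_sub_distrib, hq1, sum_indicator_const]

theorem exists_pos_indicator_le {q : G → ℝ} (hq0 : ∀ x, 0 ≤ q x) (hq : ∀ h ∈ H, 0 < q h) :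
    ∃ ε > 0, (H : Set G).indicator (fun _ => ε) ≤ q := by
  obtain ⟨h₀, hmin⟩ := Finite.exists_min fun h : H => q h
  refine ⟨q h₀, hq h₀ h₀.2, fun x => ?_⟩
  by_cases hx : x ∈ H
  · simpa [hx] using hmin ⟨x, hx⟩
  · simpa [hx] using hq0 x

end Coset

theorem tendsto_zero_of_antitone_of_le_mul {u : ℕ → ℝ} (hu0 : ∀ m, 0 ≤ u m) (hu : Antitone u)
    {N : ℕ} (hN : 0 < N) {c : ℝ} (hc0 : 0 ≤ c) (hc1 : c < 1) (hstep : ∀ m, u (m + N) ≤ c * u m) :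
    Tendsto u atTop (𝓝 0) := by
  have hgeom (k : ℕ) : u (k * N) ≤ c ^ k * u 0 := by
    induction k with
    | zero => simp
    | succ k ih =>
      calc u ((k + 1) * N) = u (k * N + N) := by rw [add_mul, one_mul]
        _ ≤ c * u (k * N) := hstep _
        _ ≤ c * (c ^ k * u 0) := mul_le_mul_of_nonneg_left ih hc0
        _ = c ^ (k + 1) * u 0 := by ring
  have hlim : Tendsto (fun m => c ^ (m / N) * u 0) atTop (𝓝 0) := by
    simpa using ((tendsto_pow_atTop_nhds_zero_of_lt_one hc0 hc1).comp
      (Nat.tendsto_div_const_atTop hN.ne')).mul_const (u 0)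
  exact squeeze_zero hu0 (fun m => (hu (Nat.div_mul_le_self m N)).trans (hgeom _)) hlim

section Basin

open scoped Classical

variable {G : Type*} [Group G] [Fintype G] [DecidableEq G] {H : Subgroup G}

theorem convPow_eq_zero_of_notMem {ν : G → ℝ} (hν : ∀ x ∉ H, ν x = 0) (n : ℕ) :
    ∀ x ∉ H, convPow ν n x = 0 := by
  induction n with
  | zero => intro x hx; simp [convPow, show x ≠ 1 from fun h => hx (h ▸ H.one_mem)]
  | succ n ih => exact fun x hx => conv_eq_zero_of_notMem ih hν hx

theorem tendsto_norm_conv_convPow {ν : G → ℝ} (hν0 : ∀ g, 0 ≤ ν g) (hν1 : ∑ g, ν g = 1)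
    (hν : ∀ x ∉ H, ν x = 0) {N : ℕ} (hN : 0 < N) (hpos : ∀ h ∈ H, 0 < convPow ν N h)
    {f : G → ℝ} (hf : ∀ g, cosetSum H f g = 0) :
    Tendsto (fun m => ‖conv f (convPow ν m)‖) atTop (𝓝 0) := by
  obtain ⟨ε, hε, hεp⟩ := exists_pos_indicator_le (convPow_nonneg hν0 N) hpos
  have hcard : (0 : ℝ) < Nat.card H := by exact_mod_cast Nat.card_pos
  have hc0 : 0 ≤ 1 - Nat.card H * ε := by
    have hmass := sum_le_sum fun x (_ : x ∈ univ) => hεp x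
    rw [sum_indicator_const, sum_convPow hν1] at hmass
    linarith
  have hc1 : 1 - Nat.card H * ε < 1 := sub_lt_self 1 (mul_pos hcard hε)
  have hcoset (m : ℕ) (g : G) : cosetSum H (conv f (convPow ν m)) g = 0 := by
    rw [cosetSum_conv (convPow_eq_zero_of_notMem hν m), hf, mul_zero]
  refine tendsto_zero_of_antitone_of_le_mul (fun _ => norm_nonneg _)
    (antitone_nat_of_succ_le fun m => ?_) hN hc0 hc1 fun m => ?_
  · calc ‖conv f (convPow ν (m + 1))‖ = ‖conv (conv f (convPow ν m)) ν‖ := by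
          rw [convPow, conv_assoc]
      _ ≤ ‖conv f (convPow ν m)‖ * ∑ g, ν g := norm_conv_le_of_nonneg _ hν0
      _ = ‖conv f (convPow ν m)‖ := by rw [hν1, mul_one]
  · rw [convPow_add, ← conv_assoc, mul_comm]
    exact norm_conv_le_of_cosetSum_eq_zero (hcoset m) hεp (sum_convPow hν1 N)

theorem cosetSum_eq_of_tendsto_conv_convPow {ν : G → ℝ} (hν1 : ∑ g, ν g = 1)
    (hν : ∀ x ∉ H, ν x = 0) {μ η : G → ℝ}
    (hlim : ∀ g, Tendsto (fun m => conv μ (convPow ν m) g) atTop (𝓝 (η g))) (g : G) :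
    cosetSum H μ g = cosetSum H η g := by
  have hlim' : Tendsto (fun m => cosetSum H (conv μ (convPow ν m)) g) atTop
      (𝓝 (cosetSum H η g)) :=
    tendsto_finsetSum _ fun h _ => hlim _
  simp only [cosetSum_conv (convPow_eq_zero_of_notMem hν _), sum_convPow hν1, one_mul] at hlim'
  exact tendsto_nhds_unique tendsto_const_nhds hlim'

theorem tendsto_conv_convPow_iff {ν : G → ℝ} (hν0 : ∀ g, 0 ≤ ν g) (hν1 : ∑ g, ν g = 1)
    (hν : ∀ x ∉ H, ν x = 0) {N : ℕ} (hN : 0 < N) (hpos : ∀ h ∈ H, 0 < convPow ν N h)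
    {η : G → ℝ} (hη : ∀ g, ∀ h ∈ H, η (g * h) = η g) (μ : G → ℝ) :
    (∀ g, Tendsto (fun m => conv μ (convPow ν m) g) atTop (𝓝 (η g))) ↔
      ∀ g, cosetSum H μ g = cosetSum H η g := by
  refine ⟨cosetSum_eq_of_tendsto_conv_convPow hν1 hν, fun hμ g => ?_⟩
  have hf (g : G) : cosetSum H (μ - η) g = 0 := by
    rw [(isLinearMap_cosetSum g).map_sub, hμ, sub_self]
  have hfix (m : ℕ) : conv η (convPow ν m) = η :=
    conv_eq_self hη (convPow_eq_zero_of_notMem hν m) (sum_convPow hν1 m)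
  rw [tendsto_iff_norm_sub_tendsto_zero]
  refine squeeze_zero (fun _ => norm_nonneg _) (fun m => ?_)
    (tendsto_norm_conv_convPow hν0 hν1 hν hN hpos hf)
  rw [sub_conv, hfix]
  exact norm_le_pi_norm (conv μ (convPow ν m) - η) g

end Basin

open scoped Classical in
theorem basin_convex_and_affine_general {G : Type*} [Group G] [Fintype G] [DecidableEq G]
    (ν : G → ℝ) (h0 : ∀ g, 0 ≤ ν g) (h1 : ∑ g, ν g = 1)
    (H : Subgroup G) (hH : H = Subgroup.closure {g : G | 0 < ν g})
    (hacyclic : ∃ N : ℕ, 0 < N ∧ {g : G | 0 < ν g} ^ N = (H : Set G))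
    (η : G → ℝ)
    (hconst : ∀ g h : G, h ∈ H → η (g * h) = η g) :
    Convex ℝ {μ : G → ℝ | (∀ g, 0 ≤ μ g) ∧ (∑ g, μ g = 1) ∧
        ∀ g : G, Filter.Tendsto (fun m => conv μ (convPow ν m) g) Filter.atTop (nhds (η g))} ∧
    {μ : G → ℝ | (∀ g, 0 ≤ μ g) ∧ (∑ g, μ g = 1) ∧
        ∀ g : G, Filter.Tendsto (fun m => conv μ (convPow ν m) g) Filter.atTop (nhds (η g))}
      = {μ : G → ℝ | (∀ g, 0 ≤ μ g) ∧ (∑ g, μ g = 1) ∧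
          ∀ g : G, ∑ h : H, μ (g * (h : G)) = (Nat.card H : ℝ) * η g} := by
  have hν (x : G) (hx : x ∉ H) : ν x = 0 :=
    le_antisymm (not_lt.1 fun hpos => hx (hH ▸ Subgroup.subset_closure hpos)) (h0 x)
  obtain ⟨N, hN, hSN⟩ := hacyclic
  have hpos (h : G) (hh : h ∈ H) : 0 < convPow ν N h :=
    convPow_pos_of_mem_pow h0 (hSN ▸ hh)
  have hbasin (μ : G → ℝ) :
      (∀ g, Tendsto (fun m => conv μ (convPow ν m) g) atTop (𝓝 (η g))) ↔
        ∀ g, cosetSum H μ g = Nat.card H * η g := by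
    simp only [tendsto_conv_convPow_iff h0 h1 hν hN hpos hconst, cosetSum_eq_card_mul (hconst _)]
  simp only [hbasin]
  exact ⟨convex_setOf_cosetSum_eq _, rfl⟩

open scoped Classical in
/-- For acyclic `ν` with `H = ⟨supp ν⟩` and `η` constant on left cosets of `H`, the basin of
attraction of `η` under `T_ν(μ) = μ * ν` is convex, and equals the set of probability
measures assigning each left coset `gH` the total mass `|H| · η(g)`. -/
theorem basin_convex_and_affine {G : Type*} [Group G] [Fintype G] [DecidableEq G]
    (ν : G → ℝ) (h0 : ∀ g, 0 ≤ ν g) (h1 : ∑ g, ν g = 1)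
    (H : Subgroup G) (hH : H = Subgroup.closure {g : G | 0 < ν g})
    (hacyclic : ∃ N : ℕ, 0 < N ∧ {g : G | 0 < ν g} ^ N = (H : Set G))
    (η : G → ℝ) (hη0 : ∀ g, 0 ≤ η g) (hη1 : ∑ g, η g = 1)
    (hconst : ∀ g h : G, h ∈ H → η (g * h) = η g) :
    Convex ℝ {μ : G → ℝ | (∀ g, 0 ≤ μ g) ∧ (∑ g, μ g = 1) ∧
        ∀ g : G, Filter.Tendsto (fun m => conv μ (convPow ν m) g) Filter.atTop (nhds (η g))} ∧
    {μ : G → ℝ | (∀ g, 0 ≤ μ g) ∧ (∑ g, μ g = 1) ∧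
        ∀ g : G, Filter.Tendsto (fun m => conv μ (convPow ν m) g) Filter.atTop (nhds (η g))}
      = {μ : G → ℝ | (∀ g, 0 ≤ μ g) ∧ (∑ g, μ g = 1) ∧
          ∀ g : G, ∑ h : H, μ (g * (h : G)) = (Nat.card H : ℝ) * η g} :=
  basin_convex_and_affine_general ν h0 h1 H hH hacyclic η hconst
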